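/- Let σ > 0, let X be a random variable with the centered Gaussian law N(0,σ²), and let l : ℝ² → ℝ be continuously differentiable with bounded partial derivatives. If g : ℝ² → ℝ is bounded, differentiable in its first variable, and satisfies the Stein equation σ² · ∂₁g(x₁, x₂) − x₁ · g(x₁, x₂) = l(x₁, x₂) − E[l(X, x₂)] for all (x₁, x₂) ∈ ℝ², then g = f_l, where f_l(x₁, x₂) := −σ⁻² ∫₀¹ (2√(t(1−t)))⁻¹ · E[X · l(√t x₁ + √(1−t) X, x₂)] dt. In other words, f_l is the unique bounded solution of the Stein equation. -/

import Mathlib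

open MeasureTheory ProbabilityTheory

/-- Partial derivative of `f : ℝ × ℝ → ℝ` in its first variable. -/
noncomputable def pderiv1 (f : ℝ × ℝ → ℝ) (p : ℝ × ℝ) : ℝ :=
  deriv (fun y => f (y, p.2)) p.1

/-- Partial derivative of `f : ℝ × ℝ → ℝ` in its second variable. -/
noncomputable def pderiv2 (f : ℝ × ℝ → ℝ) (p : ℝ × ℝ) : ℝ :=
  deriv (fun y => f (p.1, y)) p.2

/-- The Stein solution
`f_l(x₁,x₂) = −σ⁻² ∫₀¹ (2√(t(1−t)))⁻¹ E[X l(√t x₁ + √(1−t) X, x₂)] dt`. -/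
noncomputable def steinSol {Ω : Type*} [MeasurableSpace Ω] (P : Measure Ω)
    (X : Ω → ℝ) (σ : ℝ) (l : ℝ × ℝ → ℝ) : ℝ × ℝ → ℝ :=
  fun p => -(σ ^ 2)⁻¹ *
    ∫ t in (0:ℝ)..1, (2 * Real.sqrt (t * (1 - t)))⁻¹ *
      ∫ ω, X ω * l (Real.sqrt t * p.1 + Real.sqrt (1 - t) * X ω, p.2) ∂P

/-!
Fix `x₂`, write `G = g(·, x₂)`, `L = l(·, x₂)`, `v = σ²`, and let `Y ~ N(0, v)`. The Gaussian
smoothing `Φ(a, b) = E[G(a + bY)]` is differentiable in `(a, b)`, and along the curve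
`t ↦ (√t x, √(1 - t))` the function `F(t) = √t Φ(√t x, √(1 - t))` runs from `F(0) = 0` to
`F(1) = G(x)`. Writing `L = v G' - z G + c` and integrating by parts against the Gaussian,
`E[Y ψ(Y)] = v E[ψ'(Y)]`, turns `F'(t)` into `-v⁻¹ (2√(t(1-t)))⁻¹ E[Y L(√t x + √(1-t) Y)]`,
so `G(x)` is the integral defining `f_l`. Boundedness of `G` is what keeps `Φ` finite up to
`b = 1`; for the homogeneous solution `exp(x²/(2v))` it is not.
-/

open Real
open scoped NNReal ENNReal

def HasPolynomialGrowth (f : ℝ → ℝ) : Prop :=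
  ∃ M : ℝ, ∃ n : ℕ, ∀ y, |f y| ≤ M * (1 + |y|) ^ n

lemma one_add_abs_affine_le (a b y : ℝ) :
    1 + |a + b * y| ≤ (1 + |a| + |b|) * (1 + |y|) := by
  have := abs_add_le a (b * y)
  rw [abs_mul] at this
  nlinarith [abs_nonneg a, abs_nonneg b, abs_nonneg y, mul_nonneg (abs_nonneg a) (abs_nonneg y)]

lemma abs_comp_affine_le {f : ℝ → ℝ} {M : ℝ} {n : ℕ} (hM0 : 0 ≤ M)
    (hM : ∀ z, |f z| ≤ M * (1 + |z|) ^ n) (a b y : ℝ) :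
    |f (a + b * y)| ≤ M * (1 + |a| + |b|) ^ n * (1 + |y|) ^ n :=
  calc |f (a + b * y)| ≤ M * (1 + |a + b * y|) ^ n := hM _
    _ ≤ M * ((1 + |a| + |b|) * (1 + |y|)) ^ n := by gcongr; exact one_add_abs_affine_le a b y
    _ = M * (1 + |a| + |b|) ^ n * (1 + |y|) ^ n := by rw [mul_pow, mul_assoc]

namespace HasPolynomialGrowth

variable {f g : ℝ → ℝ}

lemma of_abs_le {C : ℝ} (h : ∀ y, |f y| ≤ C) : HasPolynomialGrowth f :=
  ⟨C, 0, by simpa using h⟩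

lemma const (c : ℝ) : HasPolynomialGrowth fun _ => c :=
  of_abs_le fun _ => le_rfl

lemma id : HasPolynomialGrowth fun y => y :=
  ⟨1, 1, fun y => by simp⟩

lemma exists_nonneg (hf : HasPolynomialGrowth f) :
    ∃ M, 0 ≤ M ∧ ∃ n : ℕ, ∀ y, |f y| ≤ M * (1 + |y|) ^ n := by
  obtain ⟨M, n, h⟩ := hf
  exact ⟨M, by simpa using (abs_nonneg _).trans (h 0), n, h⟩

lemma mul (hf : HasPolynomialGrowth f) (hg : HasPolynomialGrowth g) :
    HasPolynomialGrowth fun y => f y * g y := by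
  obtain ⟨M, n, hM⟩ := hf
  obtain ⟨K, k, hK⟩ := hg
  refine ⟨M * K, n + k, fun y => ?_⟩
  rw [abs_mul, pow_add, mul_mul_mul_comm]
  exact mul_le_mul (hM y) (hK y) (abs_nonneg _) ((abs_nonneg _).trans (hM y))

lemma add (hf : HasPolynomialGrowth f) (hg : HasPolynomialGrowth g) :
    HasPolynomialGrowth fun y => f y + g y := by
  obtain ⟨M, hM0, n, hM⟩ := hf.exists_nonneg
  obtain ⟨K, hK0, k, hK⟩ := hg.exists_nonneg
  refine ⟨M + K, n + k, fun y => ?_⟩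
  have h1 : (1 : ℝ) ≤ 1 + |y| := le_add_of_nonneg_right (abs_nonneg y)
  calc |f y + g y| ≤ M * (1 + |y|) ^ n + K * (1 + |y|) ^ k :=
        (abs_add_le _ _).trans (add_le_add (hM y) (hK y))
    _ ≤ M * (1 + |y|) ^ (n + k) + K * (1 + |y|) ^ (n + k) := by
        have hn := pow_le_pow_right₀ h1 (Nat.le_add_right n k)
        have hk := pow_le_pow_right₀ h1 (Nat.le_add_left k n)
        gcongr
    _ = (M + K) * (1 + |y|) ^ (n + k) := by ring

lemma const_mul (c : ℝ) (hf : HasPolynomialGrowth f) : HasPolynomialGrowth fun y => c * f y :=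
  (const c).mul hf

lemma sub (hf : HasPolynomialGrowth f) (hg : HasPolynomialGrowth g) :
    HasPolynomialGrowth fun y => f y - g y := by
  simpa [sub_eq_add_neg] using hf.add (hg.const_mul (-1))

lemma comp_affine (hf : HasPolynomialGrowth f) (a b : ℝ) :
    HasPolynomialGrowth fun y => f (a + b * y) := by
  obtain ⟨M, hM0, n, hM⟩ := hf.exists_nonneg
  exact ⟨M * (1 + |a| + |b|) ^ n, n, abs_comp_affine_le hM0 hM a b⟩

lemma of_abs_deriv_le {L L' : ℝ → ℝ} {C : ℝ}
    (hL : ∀ z, HasDerivAt L (L' z) z) (hL' : ∀ z, |L' z| ≤ C) : HasPolynomialGrowth L := by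
  refine ⟨|L 0| + C, 1, fun z => ?_⟩
  have hC : 0 ≤ C := (abs_nonneg _).trans (hL' 0)
  have h := convex_univ.norm_image_sub_le_of_norm_hasDerivWithin_le
    (fun z _ => (hL z).hasDerivWithinAt) (fun z _ => hL' z) (Set.mem_univ 0) (Set.mem_univ z)
  rw [Real.norm_eq_abs, Real.norm_eq_abs, sub_zero] at h
  have := abs_sub_abs_le_abs_sub (L z) (L 0)
  nlinarith [abs_nonneg z, abs_nonneg (L 0), mul_nonneg hC (abs_nonneg z)]

lemma integrable {m : ℝ} {v : ℝ≥0} (hf : HasPolynomialGrowth f)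
    (hm : AEStronglyMeasurable f (gaussianReal m v)) :
    Integrable f (gaussianReal m v) := by
  obtain ⟨M, n, hM⟩ := hf
  have hid : MemLp _root_.id n (gaussianReal m v) :=
    memLp_id_gaussianReal' (μ := m) (v := v) n (ENNReal.natCast_ne_top n)
  have hp : MemLp (fun y : ℝ => 1 + |y|) n (gaussianReal m v) :=
    (memLp_const (1 : ℝ)).add hid.abs
  have hint : Integrable (fun y : ℝ => M * ‖1 + |y|‖ ^ n) (gaussianReal m v) :=
    hp.integrable_norm_pow'.const_mul M
  refine hint.mono' hm (ae_of_all _ fun y => ?_)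
  simpa [abs_of_nonneg (by positivity : (0:ℝ) ≤ 1 + |y|)] using hM y

end HasPolynomialGrowth

lemma measurable_of_forall_hasDerivAt {f f' : ℝ → ℝ} (h : ∀ y, HasDerivAt f (f' y) y) :
    Measurable f' := by
  rw [show f' = deriv f from funext fun y => (h y).deriv.symm]
  exact measurable_deriv f

lemma HasDerivAt.comp_const_add_mul {G G' : ℝ → ℝ} (hG : ∀ z, HasDerivAt G (G' z) z)
    (a b y : ℝ) : HasDerivAt (fun y => G (a + b * y)) (b * G' (a + b * y)) y := by
  have h : HasDerivAt (fun y : ℝ => a + b * y) b y := by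
    simpa using ((hasDerivAt_id y).const_mul b).const_add a
  simpa [Function.comp_def, mul_comm] using (hG (a + b * y)).comp y h

lemma hasDerivAt_gaussianPDFReal (m : ℝ) (v : ℝ≥0) (y : ℝ) :
    HasDerivAt (gaussianPDFReal m v) (-((y - m) / v) * gaussianPDFReal m v y) y := by
  have h : HasDerivAt (fun z => -(z - m) ^ 2 / (2 * v)) (-(2 * (y - m)) / (2 * v)) y := by
    simpa using (((hasDerivAt_id y).sub_const m).pow 2).neg.div_const (2 * (v : ℝ))
  rw [gaussianPDFReal_def]
  refine (h.exp.const_mul _).congr_deriv ?_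
  rcases eq_or_ne (v : ℝ) 0 with hv | hv
  · simp [hv]
  · field_simp

lemma integrable_gaussianReal_iff {m : ℝ} {v : ℝ≥0} (hv : v ≠ 0) {f : ℝ → ℝ} :
    Integrable f (gaussianReal m v) ↔ Integrable fun y => gaussianPDFReal m v y * f y := by
  rw [gaussianReal_of_var_ne_zero m hv, integrable_withDensity_iff_integrable_smul'
    (measurable_gaussianPDF m v) (ae_of_all _ fun _ => gaussianPDF_lt_top)]
  simp [toReal_gaussianPDF]

theorem integral_mul_gaussianReal_eq_integral_deriv (v : ℝ≥0) {ψ ψ' : ℝ → ℝ}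
    (hψ : ∀ y, HasDerivAt ψ (ψ' y) y) (hψg : HasPolynomialGrowth ψ)
    (hψ'g : HasPolynomialGrowth ψ') :
    ∫ y, y * ψ y ∂gaussianReal 0 v = v * ∫ y, ψ' y ∂gaussianReal 0 v := by
  rcases eq_or_ne v 0 with rfl | hv
  · simp [gaussianReal_zero_var]
  have hψc : Continuous ψ := continuous_iff_continuousAt.2 fun y => (hψ y).continuousAt
  have hψ'm := measurable_of_forall_hasDerivAt hψ
  have hρ : ∀ y, HasDerivAt (fun z => -(v : ℝ) * gaussianPDFReal 0 v z)
      (y * gaussianPDFReal 0 v y) y := fun y => by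
    refine ((hasDerivAt_gaussianPDFReal 0 v y).const_mul (-(v : ℝ))).congr_deriv ?_
    field_simp [NNReal.coe_ne_zero.2 hv]
    ring
  have i_yψ := (integrable_gaussianReal_iff (m := 0) hv).1
    ((HasPolynomialGrowth.id.mul hψg).integrable
      (measurable_id.mul hψc.measurable).aestronglyMeasurable)
  have i_ψ' := (integrable_gaussianReal_iff (m := 0) hv).1
    (hψ'g.integrable hψ'm.aestronglyMeasurable)
  have i_ψ := (integrable_gaussianReal_iff (m := 0) hv).1
    (hψg.integrable hψc.aestronglyMeasurable)
  have key := integral_mul_deriv_eq_deriv_mul_of_integrable (fun y _ => hψ y) (fun y _ => hρ y)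
    (i_yψ.congr (ae_of_all _ fun y => by simp only [Pi.mul_apply]; ring))
    ((i_ψ'.const_mul (-(v : ℝ))).congr (ae_of_all _ fun y => by simp only [Pi.mul_apply]; ring))
    ((i_ψ.const_mul (-(v : ℝ))).congr (ae_of_all _ fun y => by simp only [Pi.mul_apply]; ring))
  simp only [integral_gaussianReal_eq_integral_smul hv, smul_eq_mul]
  calc ∫ y, gaussianPDFReal 0 v y * (y * ψ y) = ∫ y, ψ y * (y * gaussianPDFReal 0 v y) := by
        congr 1; ext y; ring
    _ = -∫ y, ψ' y * (-v * gaussianPDFReal 0 v y) := key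
    _ = v * ∫ y, gaussianPDFReal 0 v y * ψ' y := by
        rw [← integral_const_mul, ← integral_neg]; congr 1; ext y; ring

lemma norm_smul_fst_add_smul_snd_le (g y : ℝ) :
    ‖g • ContinuousLinearMap.fst ℝ ℝ ℝ + (y * g) • ContinuousLinearMap.snd ℝ ℝ ℝ‖
      ≤ |g| * (1 + |y|) := by
  refine (norm_add_le _ _).trans ?_
  rw [norm_smul, norm_smul, Real.norm_eq_abs, Real.norm_eq_abs, abs_mul]
  have h1 := mul_le_mul_of_nonneg_left (ContinuousLinearMap.norm_fst_le ℝ ℝ ℝ) (abs_nonneg g)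
  have h2 := mul_le_mul_of_nonneg_left (ContinuousLinearMap.norm_snd_le ℝ ℝ ℝ)
    (mul_nonneg (abs_nonneg y) (abs_nonneg g))
  linarith

lemma HasDerivAt.hasFDerivAt_comp_affine {G : ℝ → ℝ} {g y : ℝ} {q : ℝ × ℝ}
    (h : HasDerivAt G g (q.1 + q.2 * y)) :
    HasFDerivAt (fun q : ℝ × ℝ => G (q.1 + q.2 * y))
      (g • ContinuousLinearMap.fst ℝ ℝ ℝ + (y * g) • ContinuousLinearMap.snd ℝ ℝ ℝ) q := by
  have h1 : HasFDerivAt (fun q : ℝ × ℝ => q.1 + q.2 * y)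
      (ContinuousLinearMap.fst ℝ ℝ ℝ + y • ContinuousLinearMap.snd ℝ ℝ ℝ) q :=
    hasFDerivAt_fst.add (hasFDerivAt_snd.mul_const y)
  refine (h.comp_hasFDerivAt q h1).congr_fderiv ?_
  rw [smul_add, smul_smul, mul_comm]

theorem hasFDerivAt_integral_comp_affine_gaussianReal {m : ℝ} {v : ℝ≥0} {G G' : ℝ → ℝ}
    (hG : ∀ z, HasDerivAt G (G' z) z) (hGg : HasPolynomialGrowth G)
    (hG'g : HasPolynomialGrowth G') (p : ℝ × ℝ) :
    HasFDerivAt (fun q : ℝ × ℝ => ∫ y, G (q.1 + q.2 * y) ∂gaussianReal m v)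
      ((∫ y, G' (p.1 + p.2 * y) ∂gaussianReal m v) • ContinuousLinearMap.fst ℝ ℝ ℝ
        + (∫ y, y * G' (p.1 + p.2 * y) ∂gaussianReal m v) • ContinuousLinearMap.snd ℝ ℝ ℝ) p := by
  have hGc : Continuous G := continuous_iff_continuousAt.2 fun z => (hG z).continuousAt
  have hG'm := measurable_of_forall_hasDerivAt hG
  obtain ⟨M, hM0, n, hM⟩ := hG'g.exists_nonneg
  set R := 3 + |p.1| + |p.2|
  have hbound : ∀ y, ∀ q ∈ Metric.ball p 1,
      ‖G' (q.1 + q.2 * y) • ContinuousLinearMap.fst ℝ ℝ ℝ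
        + (y * G' (q.1 + q.2 * y)) • ContinuousLinearMap.snd ℝ ℝ ℝ‖
        ≤ M * R ^ n * (1 + |y|) ^ (n + 1) := by
    intro y q hq
    rw [Metric.mem_ball, Prod.dist_eq, max_lt_iff, Real.dist_eq, Real.dist_eq] at hq
    have hR : 1 + |q.1| + |q.2| ≤ R := by
      have := abs_sub_abs_le_abs_sub q.1 p.1
      have := abs_sub_abs_le_abs_sub q.2 p.2
      linarith [hq.1, hq.2]
    refine (norm_smul_fst_add_smul_snd_le _ y).trans ?_
    calc |G' (q.1 + q.2 * y)| * (1 + |y|)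
        ≤ M * (1 + |q.1| + |q.2|) ^ n * (1 + |y|) ^ n * (1 + |y|) := by
          gcongr; exact abs_comp_affine_le hM0 hM _ _ _
      _ ≤ M * R ^ n * (1 + |y|) ^ n * (1 + |y|) := by gcongr
      _ = M * R ^ n * (1 + |y|) ^ (n + 1) := by ring
  have hbound_int :
      Integrable (fun y : ℝ => M * R ^ n * (1 + |y|) ^ (n + 1)) (gaussianReal m v) :=
    HasPolynomialGrowth.integrable ⟨M * R ^ n, n + 1, fun y => by
      rw [abs_of_nonneg (by positivity)]⟩ (by fun_prop)
  have hGa : ∀ q : ℝ × ℝ, Continuous fun y => G (q.1 + q.2 * y) := fun q => by fun_prop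
  have hderiv := hasFDerivAt_integral_of_dominated_of_fderiv_le (μ := gaussianReal m v)
    (F := fun q y => G (q.1 + q.2 * y)) (bound := fun y => M * R ^ n * (1 + |y|) ^ (n + 1))
    (F' := fun q y => G' (q.1 + q.2 * y) • ContinuousLinearMap.fst ℝ ℝ ℝ
        + (y * G' (q.1 + q.2 * y)) • ContinuousLinearMap.snd ℝ ℝ ℝ)
    (Metric.ball_mem_nhds p one_pos)
    (Filter.Eventually.of_forall fun q => (hGa q).aestronglyMeasurable)
    ((hGg.comp_affine p.1 p.2).integrable (hGa p).aestronglyMeasurable)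
    (by fun_prop) (by filter_upwards with y q hq; exact hbound y q hq) hbound_int
    (by filter_upwards with y q _; exact (hG _).hasFDerivAt_comp_affine)
  have i_G' := (hG'g.comp_affine p.1 p.2).integrable (m := m) (v := v)
    (hG'm.comp (by fun_prop)).aestronglyMeasurable
  have i_yG' := (HasPolynomialGrowth.id.mul (hG'g.comp_affine p.1 p.2)).integrable
    (m := m) (v := v) (measurable_id.mul (hG'm.comp (by fun_prop))).aestronglyMeasurable
  rwa [integral_add (i_G'.smul_const _) (i_yG'.smul_const _), integral_smul_const,
    integral_smul_const] at hderiv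

-- The factor `|b|` is what cancels the singularity of `(2√(t(1-t)))⁻¹` at `t = 1`.
theorem abs_integral_mul_comp_affine_gaussianReal_le {v : ℝ≥0} {L L' : ℝ → ℝ} {C : ℝ}
    (hL : ∀ z, HasDerivAt L (L' z) z) (hL' : ∀ z, |L' z| ≤ C) (a b : ℝ) :
    |∫ y, y * L (a + b * y) ∂gaussianReal 0 v| ≤ v * |b| * C := by
  have hL'b : ∀ y, |b * L' (a + b * y)| ≤ |b| * C := fun y => by
    rw [abs_mul]; exact mul_le_mul_of_nonneg_left (hL' _) (abs_nonneg b)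
  rw [integral_mul_gaussianReal_eq_integral_deriv v (HasDerivAt.comp_const_add_mul hL a b)
    ((HasPolynomialGrowth.of_abs_deriv_le hL hL').comp_affine a b)
    (HasPolynomialGrowth.of_abs_le hL'b), abs_mul, NNReal.abs_eq, mul_assoc]
  gcongr
  simpa using norm_integral_le_of_norm_le_const (μ := gaussianReal 0 v) (C := |b| * C)
    (ae_of_all _ fun y => (Real.norm_eq_abs _).trans_le (hL'b y))

theorem integral_mul_comp_affine_gaussianReal_of_stein {v : ℝ≥0} {L G G' : ℝ → ℝ} {c : ℝ}
    (hG : ∀ z, HasDerivAt G (G' z) z) (hGg : HasPolynomialGrowth G)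
    (hG'g : HasPolynomialGrowth G') (hstein : ∀ z, v * G' z - z * G z = L z - c) (a b : ℝ) :
    ∫ y, y * L (a + b * y) ∂gaussianReal 0 v
      = v * ((1 - b ^ 2) * ∫ y, y * G' (a + b * y) ∂gaussianReal 0 v
        - a * b * ∫ y, G' (a + b * y) ∂gaussianReal 0 v
        - b * ∫ y, G (a + b * y) ∂gaussianReal 0 v) := by
  set μ := gaussianReal 0 v
  have hGc : Continuous G := continuous_iff_continuousAt.2 fun z => (hG z).continuousAt
  have hG'm := measurable_of_forall_hasDerivAt hG
  have hGa := hGg.comp_affine a b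
  have hG'a := hG'g.comp_affine a b
  have hGam : Measurable fun y => G (a + b * y) := by fun_prop
  have hG'am : Measurable fun y => G' (a + b * y) := hG'm.comp (by fun_prop)
  have hyG'a := HasPolynomialGrowth.id.mul hG'a
  have hyGa := HasPolynomialGrowth.id.mul hGa
  have ibp_G := integral_mul_gaussianReal_eq_integral_deriv v
    (HasDerivAt.comp_const_add_mul hG a b) hGa (hG'a.const_mul b)
  have ibp_yG := integral_mul_gaussianReal_eq_integral_deriv v
    (ψ := fun y => y * G (a + b * y)) (ψ' := fun y => G (a + b * y) + b * (y * G' (a + b * y)))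
    (fun y => ((hasDerivAt_id' y).mul (HasDerivAt.comp_const_add_mul hG a b y)).congr_deriv
      (by ring))
    hyGa (hGa.add (hyG'a.const_mul b))
  have i_yG' : Integrable (fun y => y * G' (a + b * y)) μ :=
    hyG'a.integrable (measurable_id.mul hG'am).aestronglyMeasurable
  have i_yG : Integrable (fun y => y * G (a + b * y)) μ :=
    hyGa.integrable (measurable_id.mul hGam).aestronglyMeasurable
  have i_yyG : Integrable (fun y => y * (y * G (a + b * y))) μ :=
    (HasPolynomialGrowth.id.mul hyGa).integrable
      (measurable_id.mul (measurable_id.mul hGam)).aestronglyMeasurable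
  have i_y : Integrable (fun y : ℝ => y) μ := HasPolynomialGrowth.id.integrable (by fun_prop)
  have i_G : Integrable (fun y => G (a + b * y)) μ := hGa.integrable hGam.aestronglyMeasurable
  have hsplit : (fun y => y * L (a + b * y)) = fun y => v * (y * G' (a + b * y))
      - a * (y * G (a + b * y)) - b * (y * (y * G (a + b * y))) + y * c := by
    ext y; rw [sub_eq_iff_eq_add.1 (hstein (a + b * y)).symm]; ring
  rw [hsplit, integral_add (by fun_prop) (i_y.mul_const c), integral_mul_const,
    integral_sub (by fun_prop) (by fun_prop), integral_sub (by fun_prop) (by fun_prop)]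
  simp only [integral_const_mul]
  rw [ibp_G, ibp_yG, integral_add i_G (i_yG'.const_mul _), integral_const_mul,
    integral_const_mul, integral_id_gaussianReal]
  ring

lemma intervalIntegrable_inv_two_sqrt_mul {f : ℝ → ℝ} {K : ℝ} (hf : Measurable f)
    (hb : ∀ t ∈ Set.Ioo (0 : ℝ) 1, |f t| ≤ K * √(1 - t)) :
    IntervalIntegrable (fun t => (2 * √(t * (1 - t)))⁻¹ * f t) volume 0 1 := by
  rw [intervalIntegrable_iff_integrableOn_Ioo_of_le zero_le_one]
  have hdom : IntegrableOn (fun t : ℝ => K / 2 * t ^ (-(1 / 2) : ℝ)) (Set.Ioo 0 1) := by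
    rw [← intervalIntegrable_iff_integrableOn_Ioo_of_le zero_le_one]
    exact (intervalIntegral.intervalIntegrable_rpow' (by norm_num)).const_mul _
  refine hdom.mono' (by fun_prop) ((ae_restrict_iff' measurableSet_Ioo).2 (ae_of_all _ ?_))
  rintro t ⟨ht0, ht1⟩
  have hs : 0 < √t := sqrt_pos.2 ht0
  have hr : 0 < √(1 - t) := sqrt_pos.2 (by linarith)
  rw [Real.norm_eq_abs, abs_mul, abs_inv, sqrt_mul ht0.le, abs_of_pos (by positivity),
    rpow_neg ht0.le, ← sqrt_eq_rpow]
  calc (2 * (√t * √(1 - t)))⁻¹ * |f t| ≤ (2 * (√t * √(1 - t)))⁻¹ * (K * √(1 - t)) := by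
        gcongr; exact hb t ⟨ht0, ht1⟩
    _ = K / 2 * (√t)⁻¹ := by field_simp

lemma hasDerivAt_sqrt_mul_sqrt_one_sub {t : ℝ} (ht : t ∈ Set.Ioo (0 : ℝ) 1) (x : ℝ) :
    HasDerivAt (fun t => (√t * x, √(1 - t))) ((2 * √t)⁻¹ * x, -(2 * √(1 - t))⁻¹) t := by
  have h1 := ((hasDerivAt_id' t).const_sub 1).sqrt (by linarith [ht.2] : 1 - t ≠ 0)
  have h2 := ((hasDerivAt_id' t).sqrt ht.1.ne').mul_const x
  exact (h2.congr_deriv (by ring)).prodMk (h1.congr_deriv (by ring))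

theorem eq_neg_inv_mul_integral_of_stein {v : ℝ≥0} (hv : v ≠ 0) {L L' G G' : ℝ → ℝ}
    {c C Cg : ℝ} (hL : ∀ z, HasDerivAt L (L' z) z) (hL' : ∀ z, |L' z| ≤ C)
    (hG : ∀ z, HasDerivAt G (G' z) z) (hGb : ∀ z, |G z| ≤ Cg)
    (hstein : ∀ z, v * G' z - z * G z = L z - c) (x : ℝ) :
    G x = -(v : ℝ)⁻¹ * ∫ t in (0 : ℝ)..1, (2 * √(t * (1 - t)))⁻¹ *
      ∫ y, y * L (√t * x + √(1 - t) * y) ∂gaussianReal 0 v := by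
  have hv' : (v : ℝ) ≠ 0 := NNReal.coe_ne_zero.2 hv
  have hGg : HasPolynomialGrowth G := .of_abs_le hGb
  have hG'g : HasPolynomialGrowth G' := by
    have hG' : G' = fun z => (v : ℝ)⁻¹ * (L z - c + z * G z) := by
      ext z; field_simp; linarith [hstein z]
    rw [hG']
    exact (((HasPolynomialGrowth.of_abs_deriv_le hL hL').sub (.const c)).add
      (HasPolynomialGrowth.id.mul hGg)).const_mul _
  set Φ : ℝ × ℝ → ℝ := fun q => ∫ y, G (q.1 + q.2 * y) ∂gaussianReal 0 v
  set Λ : ℝ × ℝ → ℝ := fun q => ∫ y, y * L (q.1 + q.2 * y) ∂gaussianReal 0 v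
  have hΦ := hasFDerivAt_integral_comp_affine_gaussianReal (m := 0) (v := v) hG hGg hG'g
  have hF : ∀ t ∈ Set.Ioo (0 : ℝ) 1, HasDerivAt (fun t => √t * Φ (√t * x, √(1 - t)))
      (-(v : ℝ)⁻¹ * ((2 * √(t * (1 - t)))⁻¹ * Λ (√t * x, √(1 - t)))) t := by
    intro t ht
    have hs : 0 < √t := sqrt_pos.2 ht.1
    have hr : 0 < √(1 - t) := sqrt_pos.2 (by linarith [ht.2])
    have h := ((hasDerivAt_id' t).sqrt ht.1.ne').mul
      ((hΦ _).comp_hasDerivAt t (hasDerivAt_sqrt_mul_sqrt_one_sub ht x))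
    refine h.congr_deriv ?_
    have hst : 1 - √(1 - t) ^ 2 = √t * √t := by
      rw [sq_sqrt (by linarith [ht.2]), mul_self_sqrt ht.1.le]; ring
    simp only [Λ, integral_mul_comp_affine_gaussianReal_of_stein hG hGg hG'g hstein,
      Function.comp_apply, add_apply, smul_apply, ContinuousLinearMap.coe_fst',
      ContinuousLinearMap.coe_snd', smul_eq_mul, sqrt_mul ht.1.le, hst]
    field_simp
    ring
  have hΦc : Continuous Φ := continuous_iff_continuousAt.2 fun p => (hΦ p).continuousAt
  have hLc : Continuous L := continuous_iff_continuousAt.2 fun z => (hL z).continuousAt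
  have hΛm : Measurable fun t => Λ (√t * x, √(1 - t)) := by
    have hc : Continuous fun p : ℝ × ℝ => p.2 * L (√p.1 * x + √(1 - p.1) * p.2) := by fun_prop
    exact hc.stronglyMeasurable.integral_prod_right'.measurable
  have hΛb : ∀ t ∈ Set.Ioo (0 : ℝ) 1, |Λ (√t * x, √(1 - t))| ≤ v * C * √(1 - t) :=
    fun t _ => by simpa [abs_of_nonneg (sqrt_nonneg _), mul_right_comm]
      using abs_integral_mul_comp_affine_gaussianReal_le (v := v) hL hL' (√t * x) (√(1 - t))
  have hFTC := intervalIntegral.integral_eq_sub_of_hasDerivAt_of_le zero_le_one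
    (continuous_sqrt.mul (hΦc.comp (by fun_prop))).continuousOn hF
    ((intervalIntegrable_inv_two_sqrt_mul hΛm hΛb).const_mul _)
  rw [intervalIntegral.integral_const_mul] at hFTC
  simpa [Φ, Λ] using hFTC.symm

theorem steinSol_unique_bounded_solution_general
    {Ω : Type*} [MeasurableSpace Ω] (P : Measure Ω)
    (σ : ℝ) (hσ : 0 < σ) (X : Ω → ℝ) (hX : Measurable X)
    (hlaw : Measure.map X P = gaussianReal 0 (Real.toNNReal (σ ^ 2)))
    (l : ℝ × ℝ → ℝ) (hl : ContDiff ℝ 1 l)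
    (hb1 : ∃ C, ∀ p, |pderiv1 l p| ≤ C)
    (g : ℝ × ℝ → ℝ) (hgb : ∃ C, ∀ p, |g p| ≤ C)
    (hgd : ∀ p : ℝ × ℝ, DifferentiableAt ℝ (fun y => g (y, p.2)) p.1)
    (hgeq : ∀ x₁ x₂ : ℝ,
      σ ^ 2 * pderiv1 g (x₁, x₂) - x₁ * g (x₁, x₂) = l (x₁, x₂) - ∫ ω, l (X ω, x₂) ∂P) :
    g = steinSol P X σ l := by
  obtain ⟨C, hC⟩ := hb1
  obtain ⟨Cg, hCg⟩ := hgb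
  have hv : (σ ^ 2).toNNReal ≠ 0 := (toNNReal_pos.2 (by positivity)).ne'
  have hvσ : ((σ ^ 2).toNNReal : ℝ) = σ ^ 2 := coe_toNNReal _ (by positivity)
  ext ⟨x, x₂⟩
  have hl₁ : ∀ z, HasDerivAt (fun y => l (y, x₂)) (pderiv1 l (z, x₂)) z := fun z =>
    ((hl.differentiable one_ne_zero (z, x₂)).comp z
      (differentiableAt_id.prodMk (differentiableAt_const x₂))).hasDerivAt
  have key := eq_neg_inv_mul_integral_of_stein hv hl₁ (fun z => hC (z, x₂))
    (fun z => (hgd (z, x₂)).hasDerivAt) (fun z => hCg (z, x₂))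
    (fun z => by rw [hvσ]; exact hgeq z x₂) x
  have hmap : ∀ t : ℝ, ∫ ω, X ω * l (√t * x + √(1 - t) * X ω, x₂) ∂P
      = ∫ y, y * l (√t * x + √(1 - t) * y, x₂) ∂gaussianReal 0 (σ ^ 2).toNNReal := fun t => by
    rw [← hlaw, integral_map hX.aemeasurable (by fun_prop)]
  rw [hvσ] at key
  simp only [steinSol, hmap]
  exact key

/-- **Uniqueness in Lemma `SolStein0`**: any bounded solution `g` of the Stein equation,
differentiable in its first variable, coincides with the Stein solution `f_l`. -/
theorem steinSol_unique_bounded_solution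
    {Ω : Type*} [MeasurableSpace Ω] (P : Measure Ω) [IsProbabilityMeasure P]
    (σ : ℝ) (hσ : 0 < σ) (X : Ω → ℝ) (hX : Measurable X)
    (hlaw : Measure.map X P = gaussianReal 0 (Real.toNNReal (σ ^ 2)))
    (l : ℝ × ℝ → ℝ) (hl : ContDiff ℝ 1 l)
    (hb1 : ∃ C, ∀ p, |pderiv1 l p| ≤ C) (hb2 : ∃ C, ∀ p, |pderiv2 l p| ≤ C)
    (g : ℝ × ℝ → ℝ) (hgb : ∃ C, ∀ p, |g p| ≤ C)
    (hgd : ∀ p : ℝ × ℝ, DifferentiableAt ℝ (fun y => g (y, p.2)) p.1)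
    (hgeq : ∀ x₁ x₂ : ℝ,
      σ ^ 2 * pderiv1 g (x₁, x₂) - x₁ * g (x₁, x₂) = l (x₁, x₂) - ∫ ω, l (X ω, x₂) ∂P) :
    g = steinSol P X σ l :=
  steinSol_unique_bounded_solution_general P σ hσ X hX hlaw l hl hb1 g hgb hgd hgeq
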